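/- arXiv:0904.2437 — 8 statements merged into one kernel-verified Lean document; each statement's English description precedes it below -/
import Mathlib

section
/- Let s, t : ℕ → Bool be periodic sequences, i.e. there exists k > 0 with s(i+k) = s(i) for all i, and similarly for t. Then Σ_{i≥0} s(i)·2^{-(i+1)} < Σ_{i≥0} t(i)·2^{-(i+1)} (where true counts as the real number 1 and false as 0) if and only if s is strictly smaller than t in the lexicographic order, i.e. there exists N such that s(i) = t(i) for all i < N, s(N) = false and t(N) = true. -/
/-!
A digit sequence that is lexicographically smaller has the smaller value, except in the tie
`0.w0111… = 0.w1000…`, which needs the smaller sequence to end in an infinite run of top digits.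
A periodic sequence with a `0` at position `N` has another one at `N + k`, so the tie cannot occur.
-/

open Real

namespace Real

variable {b : ℕ}

theorem ofDigits_lt_one {a : ℕ → Fin b} {i : ℕ} (hi : (a i : ℕ) + 1 < b) : ofDigits a < 1 := by
  have hb : 1 < b := by omega
  rw [← ofDigits_const_last_eq_one' hb]
  refine Summable.tsum_lt_tsum (i := i) (fun n => ?_) ?_ summable_ofDigitsTerm
    summable_ofDigitsTerm
  · unfold ofDigitsTerm
    gcongr
    exact_mod_cast Nat.le_sub_one_of_lt (a n).isLt
  · unfold ofDigitsTerm
    gcongr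
    exact_mod_cast Nat.lt_sub_of_add_lt hi

theorem ofDigits_lt_ofDigits {x y : ℕ → Fin b} {n j : ℕ} (hxy : ∀ i < n, x i = y i)
    (hn : x n < y n) (hj : n < j) (hxj : (x j : ℕ) + 1 < b) : ofDigits x < ofDigits y := by
  rw [ofDigits_eq_sum_add_ofDigits x (n + 1), ofDigits_eq_sum_add_ofDigits y (n + 1),
    Finset.sum_range_succ, Finset.sum_range_succ,
    Finset.sum_congr rfl fun i hi => by rw [ofDigitsTerm, hxy i (Finset.mem_range.mp hi)]]
  simp only [ofDigitsTerm]
  set ε := ((b : ℝ) ^ (n + 1))⁻¹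
  have hε : 0 < ε := by have := (x 0).pos; positivity
  have htail_x : ε * ofDigits (fun i => x (i + (n + 1))) < ε :=
    mul_lt_of_lt_one_right hε (ofDigits_lt_one (i := j - (n + 1)) (by rwa [Nat.sub_add_cancel hj]))
  have htail_y : 0 ≤ ε * ofDigits (fun i => y (i + (n + 1))) :=
    mul_nonneg hε.le (ofDigits_nonneg _)
  have hdigit : ((x n : ℝ) + 1) * ε ≤ y n * ε :=
    mul_le_mul_of_nonneg_right (by exact_mod_cast hn) hε.le
  linarith

end Real

theorem Pi.toLex_lt_toLex_iff_bool {s t : ℕ → Bool} :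
    toLex s < toLex t ↔ ∃ N, (∀ i < N, s i = t i) ∧ s N = false ∧ t N = true := by
  change (∃ N, (∀ i < N, s i = t i) ∧ s N < t N) ↔ _
  simp only [Bool.lt_iff]

theorem tsum_bool_eq_ofDigits (s : ℕ → Bool) :
    ∑' i : ℕ, (if s i then (1 : ℝ) else 0) * (2 : ℝ)⁻¹ ^ (i + 1) =
      ofDigits (finTwoEquiv.symm ∘ s) := by
  refine tsum_congr fun i => ?_
  cases h : s i <;> simp [ofDigitsTerm, finTwoEquiv, h]

theorem ofDigits_finTwoEquiv_symm_lt {s t : ℕ → Bool} (hs : ∃ k > 0, Function.Periodic s k)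
    (hlt : toLex s < toLex t) :
    ofDigits (finTwoEquiv.symm ∘ s) < ofDigits (finTwoEquiv.symm ∘ t) := by
  obtain ⟨k, hk, hper⟩ := hs
  obtain ⟨N, hagree, hsN, htN⟩ := Pi.toLex_lt_toLex_iff_bool.mp hlt
  refine ofDigits_lt_ofDigits (n := N) (j := N + k) (fun i hi => by simp [hagree i hi]) ?_ (by omega) ?_
  · simp [hsN, htN, finTwoEquiv]
  · simp [hper N, hsN, finTwoEquiv]

/-- For periodic sequences `s t : ℕ → Bool`, the binary value
`Σ_{i≥0} s(i)·2^{-(i+1)}` of `s` is strictly smaller than that of `t` iff `s` is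
strictly smaller than `t` in the lexicographic order induced by `false < true`. -/
theorem binary_value_lt_iff_lex_lt (s t : ℕ → Bool)
    (hs : ∃ k > 0, ∀ i, s (i + k) = s i)
    (ht : ∃ k > 0, ∀ i, t (i + k) = t i) :
    (∑' i : ℕ, (if s i then (1 : ℝ) else 0) * (2 : ℝ)⁻¹ ^ (i + 1)) <
      (∑' i : ℕ, (if t i then (1 : ℝ) else 0) * (2 : ℝ)⁻¹ ^ (i + 1)) ↔
    ∃ N : ℕ, (∀ i < N, s i = t i) ∧ s N = false ∧ t N = true := by
  rw [tsum_bool_eq_ofDigits, tsum_bool_eq_ofDigits, ← Pi.toLex_lt_toLex_iff_bool]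
  refine ⟨fun h => ?_, ofDigits_finTwoEquiv_symm_lt hs⟩
  rcases lt_trichotomy (toLex s) (toLex t) with hlt | heq | hgt
  · exact hlt
  · rw [toLex_inj.mp heq] at h
    exact absurd h (lt_irrefl _)
  · exact absurd (ofDigits_finTwoEquiv_symm_lt ht hgt) h.not_gt
end

section
/- Let f be the doubling map on the circle ℝ/ℤ, f(x) = 2x. For every integer n ≥ 2, the number of points x ∈ ℝ/ℤ whose minimal period under iteration of f is exactly n equals n times the number of Lyndon words of length n over the two-letter alphabet Bool. (Equivalently: the periodic orbits of exact period n of the doubling map are in bijection with the Lyndon words of length n over a two-letter alphabet.) -/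
/-!
The word `w` of length `n` encodes the point `p · 0.www…` (in binary) of `ℝ / pℤ`, namely
`binaryValue w • (p / (2 ^ n - 1))`, and rotating `w` by one letter doubles this point. Every point
of period dividing `n` is of this form, and the encoding is injective except that both constant
words give `0`. Hence points of exact period `n` correspond to words of exact rotation period `n`.
Such words fall into rotation classes of `n` elements, each containing exactly one Lyndon word,
its lexicographic minimum.
-/

/-- A nonempty list over a linearly ordered alphabet is a Lyndon word if it is
strictly smaller, in the lexicographic order, than all of its nontrivial rotations. -/
def IsLyndon {α : Type*} [LinearOrder α] (w : List α) : Prop :=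
  w ≠ [] ∧ ∀ k, 0 < k → k < w.length → w < w.rotate k

open Function Set

namespace Function

variable {α β : Type*} {f : α → α} {n : ℕ} {x : α}

theorem Semiconj.minimalPeriod_eq_of_injOn {g : β → β} {φ : α → β} (h : Semiconj φ f g)
    {s : Set α} (hs : MapsTo f s s) (hφ : InjOn φ s) (hx : x ∈ s) :
    minimalPeriod g (φ x) = minimalPeriod f x :=
  minimalPeriod_eq_minimalPeriod_iff.2 fun k => by
    simp only [IsPeriodicPt, IsFixedPt, ← h.iterate_right k x]
    exact hφ.eq_iff (hs.iterate k hx) hx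

section LinearOrder

variable [LinearOrder α]

theorem IsPeriodicPt.le_iterate (hn : 0 < n) (hx : IsPeriodicPt f n x)
    (hlt : ∀ k, 0 < k → k < n → x < f^[k] x) (m : ℕ) : x ≤ f^[m] x := by
  rw [← hx.iterate_mod_apply m]
  rcases (m % n).eq_zero_or_pos with h | h
  · rw [h, iterate_zero_apply]
  · exact (hlt _ h (m.mod_lt hn)).le

theorem IsPeriodicPt.minimalPeriod_eq_of_lt_iterate (hn : 0 < n) (hx : IsPeriodicPt f n x)
    (hlt : ∀ k, 0 < k → k < n → x < f^[k] x) : minimalPeriod f x = n :=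
  (hx.minimalPeriod_le hn).antisymm <| not_lt.1 fun hm =>
    (hlt _ (hx.minimalPeriod_pos hn) hm).ne' iterate_minimalPeriod

/-- Every periodic orbit of exact period `n` contains exactly one point that is strictly
smaller than its other `n - 1` iterates. -/
theorem bijOn_iterate_setOf_minimalPeriod_eq {s : Set α} (hs : MapsTo f s s) (hn : 0 < n) :
    BijOn (fun q : α × ℕ => f^[q.2] q.1)
      ({x ∈ s | IsPeriodicPt f n x ∧ ∀ k, 0 < k → k < n → x < f^[k] x} ×ˢ Iio n)
      {x ∈ s | minimalPeriod f x = n} := by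
  refine ⟨?_, ?_, ?_⟩
  · rintro ⟨x, k⟩ ⟨⟨hxs, hx, hlt⟩, -⟩
    refine ⟨hs.iterate k hxs, ?_⟩
    rw [minimalPeriod_apply_iterate (mk_mem_periodicPts hn hx),
      hx.minimalPeriod_eq_of_lt_iterate hn hlt]
  · rintro ⟨x, k⟩ ⟨⟨-, hx, hlt⟩, hk : k < n⟩ ⟨y, l⟩ ⟨⟨-, hy, hlt'⟩, hl : l < n⟩
      (h : f^[k] x = f^[l] y)
    -- each of `x`, `y` lies in the forward orbit of the other, so both are its minimum
    have hyx : y = f^[n - l + k] x := by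
      rw [iterate_add_apply, h, ← iterate_add_apply, Nat.sub_add_cancel hl.le, hy.eq]
    have hxy : x = f^[n - k + l] y := by
      rw [iterate_add_apply, ← h, ← iterate_add_apply, Nat.sub_add_cancel hk.le, hx.eq]
    obtain rfl : x = y :=
      le_antisymm (hyx ▸ hx.le_iterate hn hlt _) (hxy ▸ hy.le_iterate hn hlt' _)
    rw [← hx.minimalPeriod_eq_of_lt_iterate hn hlt] at hk hl
    simp only [(iterate_eq_iterate_iff_of_lt_minimalPeriod hk hl).1 h]
  · rintro y ⟨hys, hy⟩
    obtain ⟨k, hk, hmin⟩ := (Finset.range n).exists_min_image (f^[·] y) ⟨0, by simpa using hn⟩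
    rw [Finset.mem_range] at hk
    have hyper : IsPeriodicPt f n y := hy ▸ isPeriodicPt_minimalPeriod f y
    have hxper : IsPeriodicPt f n (f^[k] y) := hyper.apply_iterate k
    refine ⟨(f^[k] y, (n - k) % n),
      ⟨⟨hs.iterate k hys, hxper, fun j hj hjn => ?_⟩, Nat.mod_lt _ hn⟩, ?_⟩
    · have hne : f^[j] (f^[k] y) ≠ f^[k] y := by
        rw [← hy, ← minimalPeriod_apply_iterate (mk_mem_periodicPts hn hyper) k] at hjn
        exact not_isPeriodicPt_of_pos_of_lt_minimalPeriod hj.ne' hjn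
      refine lt_of_le_of_ne ?_ hne.symm
      rw [← iterate_add_apply, ← hyper.iterate_mod_apply (j + k)]
      exact hmin _ (Finset.mem_range.2 (Nat.mod_lt _ hn))
    · dsimp only
      rw [hxper.iterate_mod_apply, ← iterate_add_apply, Nat.sub_add_cancel hk.le, hyper.eq]

theorem ncard_setOf_minimalPeriod_eq {s : Set α} (hs : MapsTo f s s) (hn : 0 < n) :
    {x ∈ s | minimalPeriod f x = n}.ncard =
      n * {x ∈ s | IsPeriodicPt f n x ∧ ∀ k, 0 < k → k < n → x < f^[k] x}.ncard := by
  rw [← (bijOn_iterate_setOf_minimalPeriod_eq hs hn).ncard_eq, ncard_prod, ncard_Iio_nat, mul_comm]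

end LinearOrder

end Function

theorem List.rotate_one_iterate {α : Type*} (k : ℕ) :
    (fun l : List α => l.rotate 1)^[k] = fun l => l.rotate k := by
  induction k with
  | zero => exact funext fun l => (List.rotate_zero l).symm
  | succ k ih => exact funext fun l => by rw [iterate_succ_apply', ih, List.rotate_rotate]

theorem isLyndon_iff_isPeriodicPt_and_lt_iterate {α : Type*} [LinearOrder α] {n : ℕ}
    (hn : 0 < n) {w : List α} (hw : w.length = n) :
    IsLyndon w ↔ IsPeriodicPt (fun l : List α => l.rotate 1) n w ∧
      ∀ k, 0 < k → k < n → w < (fun l : List α => l.rotate 1)^[k] w := by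
  have hne : w ≠ [] := List.ne_nil_of_length_pos (hw ▸ hn)
  simp only [IsLyndon, IsPeriodicPt, IsFixedPt, List.rotate_one_iterate, ← hw,
    List.rotate_length, hne, ne_eq, not_false_eq_true, true_and]

theorem ncard_setOf_minimalPeriod_rotate_one {α : Type*} [LinearOrder α] {n : ℕ} (hn : 0 < n) :
    {w : List α | w.length = n ∧ minimalPeriod (fun l => l.rotate 1) w = n}.ncard =
      n * {w : List α | w.length = n ∧ IsLyndon w}.ncard := by
  calc _ = n * {w ∈ {l : List α | l.length = n} | IsPeriodicPt (fun l => l.rotate 1) n w ∧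
            ∀ k, 0 < k → k < n → w < (fun l : List α => l.rotate 1)^[k] w}.ncard :=
        ncard_setOf_minimalPeriod_eq (fun l hl => (l.length_rotate 1).trans hl) hn
    _ = _ := by
        congr 2
        ext w
        exact and_congr_right fun hw => (isLyndon_iff_isPeriodicPt_and_lt_iterate hn hw).symm

theorem List.isFixedPt_rotate_one_of_not_mem_and_mem {w : List Bool}
    (h : ¬(false ∈ w ∧ true ∈ w)) : IsFixedPt (fun l : List Bool => l.rotate 1) w := by
  obtain ⟨b, hb⟩ : ∃ b, ∀ c ∈ w, c = b := by
    by_cases hf : false ∈ w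
    · exact ⟨false, fun c hc => by cases c <;> simp_all⟩
    · exact ⟨true, fun c hc => by cases c <;> simp_all⟩
  rw [IsFixedPt, List.eq_replicate_iff.2 ⟨rfl, hb⟩, List.rotate_replicate]

def binaryValue : List Bool → ℕ
  | [] => 0
  | b :: t => b.toNat * 2 ^ t.length + binaryValue t

theorem binaryValue_lt (w : List Bool) : binaryValue w < 2 ^ w.length := by
  induction w with
  | nil => simp [binaryValue]
  | cons b t ih =>
    simp only [binaryValue, List.length_cons, pow_succ]
    cases b
    · simp only [Bool.toNat_false, zero_mul, zero_add]; omega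
    · simp only [Bool.toNat_true, one_mul]; omega

theorem binaryValue_inj {w w' : List Bool} (h : w.length = w'.length) :
    binaryValue w = binaryValue w' ↔ w = w' := by
  refine ⟨fun hv => ?_, congrArg _⟩
  induction w generalizing w' with
  | nil => exact (List.length_eq_zero_iff.1 h.symm).symm
  | cons b t ih =>
    obtain ⟨b', t', rfl⟩ := List.exists_cons_of_length_eq_add_one h.symm
    simp only [List.length_cons, Nat.add_right_cancel_iff] at h
    have ht := binaryValue_lt t
    have ht' := binaryValue_lt t'
    simp only [binaryValue, ← h] at hv ht'
    obtain rfl : b = b' := by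
      cases b <;> cases b' <;>
        simp only [Bool.toNat_false, Bool.toNat_true, zero_mul, one_mul, zero_add] at hv <;>
        first | rfl | omega
    rw [ih h (by omega)]

theorem exists_binaryValue_eq {n k : ℕ} (hk : k < 2 ^ n) :
    ∃ w : List Bool, w.length = n ∧ binaryValue w = k := by
  induction n generalizing k with
  | zero => exact ⟨[], rfl, by simp_all [binaryValue]⟩
  | succ n ih =>
    by_cases hlt : k < 2 ^ n
    · obtain ⟨w, hw, hv⟩ := ih hlt
      exact ⟨false :: w, by simp [hw], by simp [binaryValue, hv]⟩
    · obtain ⟨w, hw, hv⟩ := ih (k := k - 2 ^ n) (by rw [pow_succ] at hk; omega)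
      exact ⟨true :: w, by simp [hw], by simp only [binaryValue, Bool.toNat_true, hw, one_mul, hv]; omega⟩

theorem binaryValue_pos {w : List Bool} (h : true ∈ w) : 0 < binaryValue w := by
  induction w with
  | nil => simp at h
  | cons b t ih =>
    rcases List.mem_cons.1 h with rfl | h
    · simp [binaryValue]
    · exact (ih h).trans_le (by simp [binaryValue])

theorem binaryValue_lt_two_pow_sub_one {w : List Bool} (h : false ∈ w) :
    binaryValue w < 2 ^ w.length - 1 := by
  induction w with
  | nil => simp at h
  | cons b t ih =>
    have ht := binaryValue_lt t
    simp only [binaryValue, List.length_cons, pow_succ]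
    rcases List.mem_cons.1 h with rfl | h
    · simp only [Bool.toNat_false, zero_mul, zero_add]; omega
    · have := ih h
      cases b
      · simp only [Bool.toNat_false, zero_mul, zero_add]; omega
      · simp only [Bool.toNat_true, one_mul]; omega

theorem binaryValue_append_singleton (t : List Bool) (b : Bool) :
    binaryValue (t ++ [b]) = 2 * binaryValue t + b.toNat := by
  induction t with
  | nil => simp [binaryValue]
  | cons a t ih =>
    simp only [List.cons_append, binaryValue, ih, List.length_append, List.length_cons,
      List.length_nil, zero_add, pow_succ]
    ring

theorem binaryValue_rotate_one (b : Bool) (t : List Bool) :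
    binaryValue ((b :: t).rotate 1) + b.toNat * (2 ^ (b :: t).length - 1) =
      2 * binaryValue (b :: t) := by
  have := Nat.one_le_two_pow (n := t.length)
  simp only [List.rotate_cons_succ, List.rotate_zero, binaryValue_append_singleton, binaryValue,
    List.length_cons, pow_succ]
  cases b
  · simp only [Bool.toNat_false, zero_mul, add_zero, zero_add]
  · simp only [Bool.toNat_true, one_mul]; omega

section Circle

variable {p : ℝ}

variable (p) in
def doublingMap : AddCircle p → AddCircle p := fun y => (2 : ℤ) • y

variable (p) in
/-- The point `p · 0.www…` (in binary): this periodic expansion sums to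
`p · binaryValue w / (2 ^ w.length - 1)`. -/
noncomputable def binaryPoint (w : List Bool) : AddCircle p :=
  binaryValue w • ((p / (2 ^ w.length - 1 : ℕ) : ℝ) : AddCircle p)

theorem AddCircle.nsmul_period_div (m : ℕ) : m • ((p / m : ℝ) : AddCircle p) = 0 := by
  rcases eq_or_ne m 0 with rfl | hm
  · exact zero_nsmul _
  · rw [← AddCircle.coe_nsmul, nsmul_eq_mul, mul_div_cancel₀ _ (Nat.cast_ne_zero.2 hm),
      AddCircle.coe_period]

theorem semiconj_binaryPoint :
    Semiconj (binaryPoint p) (fun w => w.rotate 1) (doublingMap p) := by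
  rintro (_ | ⟨b, t⟩)
  · simp [binaryPoint, binaryValue, doublingMap]
  · simp only [binaryPoint, doublingMap, List.length_rotate]
    rw [ofNat_zsmul, smul_smul, ← binaryValue_rotate_one, add_nsmul, mul_comm, mul_nsmul,
      AddCircle.nsmul_period_div, nsmul_zero, add_zero]

variable [Fact (0 < p)]

theorem binaryPoint_injOn (n : ℕ) :
    InjOn (binaryPoint p) {w | w.length = n ∧ false ∈ w ∧ true ∈ w} := by
  rintro w ⟨hw, hf, ht⟩ w' ⟨hw', hf', ht'⟩ h
  have hlt := binaryValue_lt_two_pow_sub_one hf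
  have hlt' := binaryValue_lt_two_pow_sub_one hf'
  simp only [binaryPoint, hw, hw'] at h hlt hlt'
  rw [nsmul_eq_nsmul_iff_modEq, AddCircle.addOrderOf_period_div (by omega)] at h
  exact (binaryValue_inj (hw.trans hw'.symm)).1 (h.eq_of_lt_of_lt hlt hlt')

theorem exists_binaryPoint_eq {n : ℕ} (hn : 0 < n) {x : AddCircle p}
    (hx : IsPeriodicPt (doublingMap p) n x) :
    ∃ w : List Bool, w.length = n ∧ binaryPoint p w = x := by
  have hpow : 2 ≤ 2 ^ n := Nat.le_self_pow hn.ne' 2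
  have htors : (2 ^ n - 1 : ℕ) • x = 0 := by
    have hiter : (doublingMap p)^[n] = ((2 : ℤ) ^ n • ·) := smul_iterate (2 : ℤ) n
    have : ((2 : ℤ) ^ n) • x = x := by rw [← congrFun hiter x, hx.eq]
    rw [← natCast_zsmul, Nat.cast_sub (by omega), sub_smul]
    push_cast
    rw [this, one_smul, sub_self]
  obtain ⟨m, hm, rfl⟩ := (AddCircle.nsmul_eq_zero_iff (by omega)).1 htors
  obtain ⟨w, hw, rfl⟩ := exists_binaryValue_eq (n := n) (hm.trans_le (Nat.sub_le _ _))
  refine ⟨w, hw, ?_⟩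
  rw [binaryPoint, AddCircle.natCast_div_mul_eq_nsmul, hw]

theorem minimalPeriod_doublingMap_binaryPoint (w : List Bool) :
    minimalPeriod (doublingMap p) (binaryPoint p w) = minimalPeriod (fun l => l.rotate 1) w := by
  by_cases h : false ∈ w ∧ true ∈ w
  · refine semiconj_binaryPoint.minimalPeriod_eq_of_injOn (fun l hl => ?_)
      (binaryPoint_injOn w.length) ⟨rfl, h⟩
    simpa only [mem_ofPred_eq, List.length_rotate, List.mem_rotate] using hl
  · have hfix := List.isFixedPt_rotate_one_of_not_mem_and_mem h
    rw [minimalPeriod_eq_one_iff_isFixedPt.2 hfix,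
      minimalPeriod_eq_one_iff_isFixedPt.2 (hfix.map semiconj_binaryPoint)]

theorem ncard_setOf_minimalPeriod_doublingMap {n : ℕ} (hn : 2 ≤ n) :
    {x | minimalPeriod (doublingMap p) x = n}.ncard =
      {w : List Bool | w.length = n ∧ minimalPeriod (fun l => l.rotate 1) w = n}.ncard := by
  set W := {w : List Bool | w.length = n ∧ minimalPeriod (fun l => l.rotate 1) w = n}
  have himage : binaryPoint p '' W = {x | minimalPeriod (doublingMap p) x = n} := by
    ext x
    refine ⟨?_, fun hx => ?_⟩
    · rintro ⟨w, ⟨-, hw⟩, rfl⟩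
      rw [mem_ofPred_eq, minimalPeriod_doublingMap_binaryPoint, hw]
    · obtain ⟨w, hw, rfl⟩ :=
        exists_binaryPoint_eq (by omega) (hx ▸ isPeriodicPt_minimalPeriod (doublingMap p) x)
      exact ⟨w, ⟨hw, (minimalPeriod_doublingMap_binaryPoint w).symm.trans hx⟩, rfl⟩
  -- constant words are fixed by rotation, so they have period `1 < n`
  have hnonconst : W ⊆ {w | w.length = n ∧ false ∈ w ∧ true ∈ w} := by
    rintro w ⟨hw, hper⟩
    refine ⟨hw, not_not.1 fun h => ?_⟩
    rw [minimalPeriod_eq_one_iff_isFixedPt.2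
      (List.isFixedPt_rotate_one_of_not_mem_and_mem h)] at hper
    omega
  rw [← himage, ((binaryPoint_injOn n).mono hnonconst).ncard_image]

end Circle

/-- For every `n ≥ 2`, the number of points of the circle `ℝ/ℤ` of
minimal period exactly `n` under the doubling map `x ↦ 2x` equals `n` times the
number of Lyndon words of length `n` over the two-letter alphabet `Bool`. -/
theorem doubling_map_periodic_points_eq_lyndon_words (n : ℕ) (hn : 2 ≤ n) :
    Set.ncard {x : AddCircle (1 : ℝ) |
        Function.minimalPeriod (fun y : AddCircle (1 : ℝ) => (2 : ℤ) • y) x = n} =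
      n * Set.ncard {w : List Bool | w.length = n ∧ IsLyndon w} :=
  (ncard_setOf_minimalPeriod_doublingMap (p := 1) hn).trans
    (ncard_setOf_minimalPeriod_rotate_one (by omega))
end

section
/- Let l be a list of elements of SL₂(ℤ), each entry equal to X or to Y. If l contains at least one X and at least one Y, then the trace of the product of l is strictly greater than 2. -/
open Matrix

/-!
The matrices `A ≥ 1` entrywise (nonnegative, with diagonal entries at least `1`) form a monoid
containing `X` and `Y`, and in it a product dominates each of its factors entrywise. So both
off-diagonal entries `b, c` of the product are at least `1`, and `det = 1` gives
`(a + d)² ≥ 4ad = 4(1 + bc) > 4`.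
-/

/-- The matrix `X = [[1,0],[1,1]]` as an element of `SL₂(ℤ)`. -/
def matX : Matrix.SpecialLinearGroup (Fin 2) ℤ :=
  ⟨!![1, 0; 1, 1], by norm_num [Matrix.det_fin_two_of]⟩

/-- The matrix `Y = [[1,1],[0,1]]` as an element of `SL₂(ℤ)`. -/
def matY : Matrix.SpecialLinearGroup (Fin 2) ℤ :=
  ⟨!![1, 1; 0, 1], by norm_num [Matrix.det_fin_two_of]⟩

namespace Matrix

section OneLE

variable {n R : Type*} [Fintype n] [Semiring R] [PartialOrder R] [IsOrderedRing R]

theorem apply_mul_apply_le_mul_apply {A B : Matrix n n R} (hA : ∀ i j, 0 ≤ A i j)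
    (hB : ∀ i j, 0 ≤ B i j) (i k j : n) : A i k * B k j ≤ (A * B) i j :=
  Finset.single_le_sum (fun l _ => mul_nonneg (hA i l) (hB l j)) (Finset.mem_univ k)

variable [DecidableEq n]

variable (n R) in
def oneLESubmonoid : Submonoid (Matrix n n R) where
  carrier := {A | ∀ i j, (1 : Matrix n n R) i j ≤ A i j}
  one_mem' _ _ := le_rfl
  mul_mem' {A B} hA hB i j := calc
    (1 : Matrix n n R) i j ≤ A i j := hA i j
    _ ≤ A i j * B j j := le_mul_of_one_le_right ((zero_le_one_elem i j).trans (hA i j)) (by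
      simpa using hB j j)
    _ ≤ (A * B) i j := apply_mul_apply_le_mul_apply
      (fun i j => (zero_le_one_elem i j).trans (hA i j))
      (fun i j => (zero_le_one_elem i j).trans (hB i j)) i j j

theorem nonneg_of_mem_oneLESubmonoid {A : Matrix n n R} (hA : A ∈ oneLESubmonoid n R) (i j : n) :
    0 ≤ A i j :=
  (zero_le_one_elem i j).trans (hA i j)

theorem one_le_apply_self_of_mem_oneLESubmonoid {A : Matrix n n R} (hA : A ∈ oneLESubmonoid n R)
    (i : n) : 1 ≤ A i i := by
  simpa using hA i i

theorem apply_le_mul_mul_apply {A B C : Matrix n n R} (hA : A ∈ oneLESubmonoid n R)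
    (hB : B ∈ oneLESubmonoid n R) (hC : C ∈ oneLESubmonoid n R) (i j : n) :
    B i j ≤ (A * B * C) i j := by
  have hAB := (oneLESubmonoid n R).mul_mem hA hB
  calc
    B i j ≤ A i i * B i j :=
      le_mul_of_one_le_left (nonneg_of_mem_oneLESubmonoid hB i j)
        (one_le_apply_self_of_mem_oneLESubmonoid hA i)
    _ ≤ (A * B) i j := apply_mul_apply_le_mul_apply
      (nonneg_of_mem_oneLESubmonoid hA) (nonneg_of_mem_oneLESubmonoid hB) i i j
    _ ≤ (A * B) i j * C j j :=
      le_mul_of_one_le_right (nonneg_of_mem_oneLESubmonoid hAB i j)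
        (one_le_apply_self_of_mem_oneLESubmonoid hC j)
    _ ≤ (A * B * C) i j := apply_mul_apply_le_mul_apply
      (nonneg_of_mem_oneLESubmonoid hAB) (nonneg_of_mem_oneLESubmonoid hC) i j j

end OneLE

namespace SpecialLinearGroup

variable {n R : Type*} [Fintype n] [DecidableEq n] [CommRing R] [PartialOrder R] [IsOrderedRing R]

theorem list_prod_mem_oneLESubmonoid {l : List (SpecialLinearGroup n R)}
    (hl : ∀ g ∈ l, (g : Matrix n n R) ∈ oneLESubmonoid n R) :
    (l.prod : Matrix n n R) ∈ oneLESubmonoid n R :=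
  ((oneLESubmonoid n R).comap coeMonoidHom).list_prod_mem hl

theorem apply_le_list_prod_apply {l : List (SpecialLinearGroup n R)}
    (hl : ∀ g ∈ l, (g : Matrix n n R) ∈ oneLESubmonoid n R) {g : SpecialLinearGroup n R}
    (hg : g ∈ l) (i j : n) : (g : Matrix n n R) i j ≤ (l.prod : Matrix n n R) i j := by
  obtain ⟨s, t, rfl⟩ := List.append_of_mem hg
  rw [List.prod_append, List.prod_cons, ← mul_assoc, coe_mul, coe_mul]
  exact apply_le_mul_mul_apply
    (list_prod_mem_oneLESubmonoid fun g hg => hl g (by simp [hg]))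
    (hl g (by simp))
    (list_prod_mem_oneLESubmonoid fun g hg => hl g (by simp [hg]))
    i j

end SpecialLinearGroup

theorem two_lt_trace_of_det_eq_one {R : Type*} [CommRing R] [LinearOrder R]
    [IsStrictOrderedRing R] {M : Matrix (Fin 2) (Fin 2) R} (hdet : M.det = 1)
    (h01 : 0 < M 0 1) (h10 : 0 < M 1 0) (htr : 0 ≤ M.trace) : 2 < M.trace := by
  rw [det_fin_two] at hdet
  rw [trace_fin_two] at htr ⊢
  nlinarith [sq_nonneg (M 0 0 - M 1 1), mul_pos h01 h10]

end Matrix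

theorem matX_mem_oneLESubmonoid :
    (matX : Matrix (Fin 2) (Fin 2) ℤ) ∈ oneLESubmonoid (Fin 2) ℤ := by
  intro i j
  fin_cases i <;> fin_cases j <;> simp [matX]

theorem matY_mem_oneLESubmonoid :
    (matY : Matrix (Fin 2) (Fin 2) ℤ) ∈ oneLESubmonoid (Fin 2) ℤ := by
  intro i j
  fin_cases i <;> fin_cases j <;> simp [matY]

/-- the product of any list of `X`'s and `Y`'s containing at least one
`X` and at least one `Y` has trace strictly greater than `2`. -/
theorem trace_prod_XY_gt_two (l : List (Matrix.SpecialLinearGroup (Fin 2) ℤ))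
    (hl : ∀ z ∈ l, z = matX ∨ z = matY) (hX : matX ∈ l) (hY : matY ∈ l) :
    2 < Matrix.trace (l.prod : Matrix (Fin 2) (Fin 2) ℤ) := by
  have hS : ∀ g ∈ l, (g : Matrix (Fin 2) (Fin 2) ℤ) ∈ oneLESubmonoid (Fin 2) ℤ := by
    intro g hg
    rcases hl g hg with rfl | rfl
    exacts [matX_mem_oneLESubmonoid, matY_mem_oneLESubmonoid]
  have hM := SpecialLinearGroup.list_prod_mem_oneLESubmonoid hS
  refine two_lt_trace_of_det_eq_one l.prod.det_coe ?_ ?_ ?_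
  · exact one_pos.trans_le <| by
      simpa [matY] using SpecialLinearGroup.apply_le_list_prod_apply hS hY 0 1
  · exact one_pos.trans_le <| by
      simpa [matX] using SpecialLinearGroup.apply_le_list_prod_apply hS hX 1 0
  · rw [trace_fin_two]
    exact add_nonneg (nonneg_of_mem_oneLESubmonoid hM 0 0) (nonneg_of_mem_oneLESubmonoid hM 1 1)
end

section
/- Let t and d be integers such that the polynomial x² − t·x + d is irreducible over ℚ, and let R = ℤ[α] = ℤ[X]/(X² − tX + d), with α the image of X. Consider: (i) the set of 2×2 integer matrices A satisfying A·A − t·A + d·I = 0, equipped with the equivalence A ∼ B iff there is a unit U of the ring of 2×2 integer matrices (an integer matrix of determinant ±1) with B = U·A·U⁻¹; and (ii) the set of nonzero ideals of R, equipped with the equivalence I ≈ J iff there exist nonzero elements a, b of R with (a)·I = (b)·J, where (a) denotes the principal ideal generated by a and the product is the product of ideals. Then there exists a bijection between the quotient of (i) by ∼ and the quotient of (ii) by ≈. -/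
open Polynomial

/-- The order `ℤ[α] = ℤ[X]/(X² − tX + d)` of the quadratic field `ℚ(α)`. -/
def QuadOrder (t d : ℤ) : Type :=
  AdjoinRoot ((X : ℤ[X]) ^ 2 - C t * X + C d)

noncomputable instance (t d : ℤ) : CommRing (QuadOrder t d) :=
  inferInstanceAs (CommRing (AdjoinRoot _))

/-- Two 2×2 integer matrices are equivalent if they are conjugate by a unit of the
ring of 2×2 integer matrices (i.e. an integer matrix of determinant ±1). -/
def MatRel (A B : Matrix (Fin 2) (Fin 2) ℤ) : Prop :=
  ∃ U : (Matrix (Fin 2) (Fin 2) ℤ)ˣ,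
    B = (U : Matrix (Fin 2) (Fin 2) ℤ) * A * ((U⁻¹ : (Matrix (Fin 2) (Fin 2) ℤ)ˣ) :
          Matrix (Fin 2) (Fin 2) ℤ)

/-- Two nonzero ideals `I, J` of a commutative ring are equivalent if `(a)·I = (b)·J`
for some nonzero elements `a, b`. -/
def IdealRel {R : Type*} [CommRing R] (I J : Ideal R) : Prop :=
  ∃ a b : R, a ≠ 0 ∧ b ≠ 0 ∧ Ideal.span {a} * I = Ideal.span {b} * J

/-!
Write `A = !![a, b; c, a']`. Since `x² - tx + d` has no rational root, `c ≠ 0`, and `(c, α - a)` is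
a row eigenvector of `A` for `α`; so `x ↦ c x₀ + (α - a) x₁` identifies `ℤ²`, with `α` acting
through `A`, with the ideal `(c, α - a)` as a `ℤ[α]`-module. Conversely, multiplication by `α` in a
`ℤ`-basis of a nonzero ideal is such a matrix `A`. Conjugating `A` by `GL₂(ℤ)` is a change of basis
of the same module, and two of these modules are isomorphic exactly when the ideals are
proportional, `(a) I = (b) J`: an isomorphism is multiplication by `a / b`.
-/

open Matrix

lemma natDegree_X_sq_sub_C_mul_X_add_C {R : Type*} [CommRing R] [Nontrivial R] (t d : R) :
    ((X : R[X]) ^ 2 - C t * X + C d).natDegree = 2 := by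
  compute_degree!

lemma monic_X_sq_sub_C_mul_X_add_C {R : Type*} [CommRing R] [Nontrivial R] (t d : R) :
    ((X : R[X]) ^ 2 - C t * X + C d).Monic := by
  monicity!

lemma matRel_iff_exists_linearEquiv {A B : Matrix (Fin 2) (Fin 2) ℤ} :
    MatRel A B ↔ ∃ e : (Fin 2 → ℤ) ≃ₗ[ℤ] (Fin 2 → ℤ), ∀ x, e (A *ᵥ x) = B *ᵥ e x := by
  constructor
  · rintro ⟨U, rfl⟩
    refine ⟨LinearEquiv.ofLinearMap (toLin' U) (toLin' U⁻¹.1) ?_ ?_, fun x => ?_⟩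
    · simp [← toLin'_mul]
    · simp [← toLin'_mul]
    · simp only [LinearEquiv.coe_ofLinearMap, toLin'_apply, mulVec_mulVec, mul_assoc,
        Units.inv_mul, mul_one]
  · rintro ⟨e, he⟩
    refine ⟨⟨LinearMap.toMatrix' e, LinearMap.toMatrix' e.symm, ?_, ?_⟩, ?_⟩
    · simp [← LinearMap.toMatrix'_comp]
    · simp [← LinearMap.toMatrix'_comp]
    · refine toLin'.injective (LinearMap.ext fun x => ?_)
      simpa [toLin'_mul] using (he (e.symm x)).symm

section Quadratic

variable {t d : ℤ} {A : Matrix (Fin 2) (Fin 2) ℤ}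
  (hA : A * A - t • A + d • (1 : Matrix (Fin 2) (Fin 2) ℤ) = 0)
include hA

lemma entries_of_quadratic :
    A 0 0 * A 0 0 + A 0 1 * A 1 0 - t * A 0 0 + d = 0 ∧ A 1 0 * (A 0 0 + A 1 1 - t) = 0 := by
  have h00 := congrFun₂ hA 0 0
  have h10 := congrFun₂ hA 1 0
  simp only [Matrix.sub_apply, Matrix.add_apply, Matrix.smul_apply, mul_apply, Fin.sum_univ_two,
    one_apply_eq, one_apply_ne one_ne_zero, smul_eq_mul, Matrix.zero_apply] at h00 h10
  exact ⟨by linear_combination h00, by linear_combination h10⟩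

variable (hroot : ∀ n : ℤ, n ^ 2 - t * n + d ≠ 0)
include hroot

lemma apply_one_zero_ne_zero_of_quadratic : A 1 0 ≠ 0 := by
  intro h10
  refine hroot (A 0 0) ?_
  linear_combination (entries_of_quadratic hA).1 - A 0 1 * h10

lemma trace_eq_of_quadratic : A.trace = t := by
  rw [trace_fin_two, ← sub_eq_zero]
  exact (mul_eq_zero.1 (entries_of_quadratic hA).2).resolve_left
    (apply_one_zero_ne_zero_of_quadratic hA hroot)

lemma det_eq_of_quadratic : A.det = d := by
  have htr := trace_eq_of_quadratic hA hroot
  rw [trace_fin_two] at htr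
  rw [det_fin_two]
  linear_combination A 0 0 * htr - (entries_of_quadratic hA).1

end Quadratic

namespace QuadOrder

variable {t d : ℤ}

variable (t d) in
noncomputable def root : QuadOrder t d := AdjoinRoot.root _

variable (t d) in
lemma root_sq : root t d ^ 2 = t * root t d - d := by
  have h := AdjoinRoot.eval₂_root ((X : ℤ[X]) ^ 2 - C t * X + C d)
  simp only [eval₂_add, eval₂_sub, eval₂_mul, eval₂_pow, eval₂_X, eval₂_C] at h
  simp only [AdjoinRoot.of, eq_intCast] at h
  have h' : root t d ^ 2 - t * root t d + d = 0 := h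
  linear_combination h'

variable (t d) in
noncomputable def basis : Module.Basis (Fin 2) ℤ (QuadOrder t d) :=
  (AdjoinRoot.powerBasis' (monic_X_sq_sub_C_mul_X_add_C t d)).basis.reindex
    (finCongr (natDegree_X_sq_sub_C_mul_X_add_C t d))

lemma basis_apply (i : Fin 2) : basis t d i = root t d ^ (i : ℕ) := by
  erw [Module.Basis.reindex_apply, PowerBasis.basis_eq_pow]
  rfl

lemma eq_zero_of_intCast_add_intCast_mul_root_eq_zero {p q : ℤ}
    (h : (p : QuadOrder t d) + q * root t d = 0) : p = 0 ∧ q = 0 := by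
  have := Fintype.linearIndependent_iff.mp (basis t d).linearIndependent ![p, q]
    (by simpa [Fin.sum_univ_two, basis_apply] using h)
  exact ⟨this 0, this 1⟩

lemma exists_eq_intCast_add_intCast_mul_root (r : QuadOrder t d) :
    ∃ p q : ℤ, r = p + q * root t d := by
  refine ⟨(basis t d).repr r 0, (basis t d).repr r 1, ?_⟩
  simpa [Fin.sum_univ_two, basis_apply] using ((basis t d).sum_repr r).symm

section Irreducible

variable (hirr : Irreducible ((X : ℚ[X]) ^ 2 - C (t : ℚ) * X + C (d : ℚ)))
include hirr

lemma isDomain_of_irreducible : IsDomain (QuadOrder t d) := by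
  refine AdjoinRoot.isDomain_of_prime (Irreducible.prime ?_)
  refine (monic_X_sq_sub_C_mul_X_add_C t d).irreducible_of_irreducible_map
    (Int.castRingHom ℚ) _ ?_
  simpa using hirr

lemma sq_sub_mul_add_ne_zero_of_irreducible (n : ℤ) : n ^ 2 - t * n + d ≠ 0 := by
  intro h
  refine hirr.not_isRoot_of_natDegree_ne_one (x := (n : ℚ))
    (by rw [natDegree_X_sq_sub_C_mul_X_add_C]; norm_num) ?_
  simp only [IsRoot, eval_add, eval_sub, eval_mul, eval_pow, eval_X, eval_C]
  exact_mod_cast h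

end Irreducible

/-- `A` is the matrix of multiplication by `α` on `J` in the `ℤ`-basis `χ e₀, χ e₁` of `J`. -/
structure IsMulRootMatrix (A : Matrix (Fin 2) (Fin 2) ℤ) (J : Ideal (QuadOrder t d))
    (χ : (Fin 2 → ℤ) →ₗ[ℤ] QuadOrder t d) : Prop where
  injective : Function.Injective χ
  range_eq : LinearMap.range χ = J.restrictScalars ℤ
  map_mulVec (x : Fin 2 → ℤ) : χ (A *ᵥ x) = root t d * χ x

/-- `r = p + qα` acts on `ℤ²` as `p + qA`. -/
lemma exists_forall_map_eq_mul (A : Matrix (Fin 2) (Fin 2) ℤ) (r : QuadOrder t d)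
    (x : Fin 2 → ℤ) :
    ∃ y, ∀ χ : (Fin 2 → ℤ) →ₗ[ℤ] QuadOrder t d,
      (∀ x, χ (A *ᵥ x) = root t d * χ x) → χ y = r * χ x := by
  obtain ⟨p, q, rfl⟩ := exists_eq_intCast_add_intCast_mul_root r
  refine ⟨p • x + q • A *ᵥ x, fun χ hχ => ?_⟩
  rw [map_add, map_zsmul, map_zsmul, hχ, zsmul_eq_mul, zsmul_eq_mul]
  ring

lemma mul_mem_range {A : Matrix (Fin 2) (Fin 2) ℤ} {χ : (Fin 2 → ℤ) →ₗ[ℤ] QuadOrder t d}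
    (hχ : ∀ x, χ (A *ᵥ x) = root t d * χ x) (r : QuadOrder t d) (x : Fin 2 → ℤ) :
    r * χ x ∈ LinearMap.range χ := by
  obtain ⟨y, hy⟩ := exists_forall_map_eq_mul A r x
  exact ⟨y, hy χ hχ⟩

lemma mul_comm_of_map_mulVec {A : Matrix (Fin 2) (Fin 2) ℤ}
    {χ ψ : (Fin 2 → ℤ) →ₗ[ℤ] QuadOrder t d} (hinj : Function.Injective χ)
    (hχ : ∀ x, χ (A *ᵥ x) = root t d * χ x) (hψ : ∀ x, ψ (A *ᵥ x) = root t d * ψ x)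
    (u w : Fin 2 → ℤ) : χ u * ψ w = χ w * ψ u := by
  obtain ⟨y, hy⟩ := exists_forall_map_eq_mul A (χ u) w
  obtain ⟨z, hz⟩ := exists_forall_map_eq_mul A (χ w) u
  have hyz : y = z := hinj (by rw [hy χ hχ, hz χ hχ, mul_comm])
  rw [← hy ψ hψ, ← hz ψ hψ, hyz]

namespace IsMulRootMatrix

variable {A B : Matrix (Fin 2) (Fin 2) ℤ} {I J : Ideal (QuadOrder t d)}
  {χ ψ : (Fin 2 → ℤ) →ₗ[ℤ] QuadOrder t d}

lemma mem_iff (h : IsMulRootMatrix A J χ) {y : QuadOrder t d} : y ∈ J ↔ ∃ x, χ x = y := by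
  rw [← Submodule.restrictScalars_mem ℤ, ← h.range_eq, LinearMap.mem_range]

lemma ne_bot (h : IsMulRootMatrix A J χ) : J ≠ ⊥ := by
  intro hJ
  have : χ (Pi.single 0 1) ∈ J := h.mem_iff.2 ⟨_, rfl⟩
  rw [hJ, Ideal.mem_bot, ← map_zero χ] at this
  simpa using h.injective this

lemma quadratic (h : IsMulRootMatrix A J χ) :
    A * A - t • A + d • (1 : Matrix (Fin 2) (Fin 2) ℤ) = 0 := by
  have hx (x : Fin 2 → ℤ) : χ ((A * A - t • A + d • 1) *ᵥ x) = χ 0 := by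
    rw [add_mulVec, sub_mulVec, ← mulVec_mulVec, smul_mulVec, smul_mulVec, one_mulVec,
      map_add, map_sub, h.map_mulVec, h.map_mulVec, map_zsmul, map_zsmul, h.map_mulVec,
      zsmul_eq_mul, zsmul_eq_mul, map_zero]
    linear_combination χ x * root_sq t d
  refine toLin'.injective (LinearMap.ext fun x => ?_)
  rw [toLin'_apply, toLin'_apply, zero_mulVec]
  exact h.injective (hx x)

lemma conj (h : IsMulRootMatrix A J χ) (e : (Fin 2 → ℤ) ≃ₗ[ℤ] (Fin 2 → ℤ))
    (he : ∀ x, e (A *ᵥ x) = B *ᵥ e x) : IsMulRootMatrix B J (χ ∘ₗ e.symm) where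
  injective := h.injective.comp e.symm.injective
  range_eq := by rw [LinearMap.range_comp, LinearEquiv.range, Submodule.map_top, h.range_eq]
  map_mulVec x := by
    have := he (e.symm x)
    rw [LinearEquiv.apply_symm_apply] at this
    simp only [LinearMap.comp_apply, LinearEquiv.coe_coe]
    rw [← this, LinearEquiv.symm_apply_apply, h.map_mulVec]

lemma idealRel (hI : IsMulRootMatrix A I χ) (hJ : IsMulRootMatrix A J ψ) : IdealRel I J := by
  have hne : (Pi.single 0 1 : Fin 2 → ℤ) ≠ 0 := by simp
  refine ⟨ψ (Pi.single 0 1), χ (Pi.single 0 1), (map_ne_zero_iff ψ hJ.injective).2 hne,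
    (map_ne_zero_iff χ hI.injective).2 hne, ?_⟩
  have hcomm := mul_comm_of_map_mulVec hI.injective hI.map_mulVec hJ.map_mulVec
  ext y
  simp only [Ideal.mem_span_singleton_mul, hI.mem_iff, hJ.mem_iff]
  constructor
  · rintro ⟨_, ⟨u, rfl⟩, rfl⟩
    exact ⟨ψ u, ⟨u, rfl⟩, by linear_combination -hcomm u (Pi.single 0 1)⟩
  · rintro ⟨_, ⟨u, rfl⟩, rfl⟩
    exact ⟨χ u, ⟨u, rfl⟩, by linear_combination hcomm u (Pi.single 0 1)⟩

lemma range_mulLeft_comp (h : IsMulRootMatrix A J χ) (a : QuadOrder t d) :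
    LinearMap.range (LinearMap.mulLeft ℤ a ∘ₗ χ) = (Ideal.span {a} * J).restrictScalars ℤ := by
  ext y
  simp only [LinearMap.mem_range, LinearMap.comp_apply, LinearMap.mulLeft_apply,
    Submodule.restrictScalars_mem, Ideal.mem_span_singleton_mul, h.mem_iff]
  constructor
  · rintro ⟨x, rfl⟩
    exact ⟨_, ⟨x, rfl⟩, rfl⟩
  · rintro ⟨_, ⟨x, rfl⟩, rfl⟩
    exact ⟨x, rfl⟩

lemma matRel [IsDomain (QuadOrder t d)] (hI : IsMulRootMatrix A I χ)
    (hJ : IsMulRootMatrix B J ψ) (h : IdealRel I J) : MatRel A B := by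
  obtain ⟨a, b, ha, hb, hab⟩ := h
  set f := LinearMap.mulLeft ℤ a ∘ₗ χ
  set g := LinearMap.mulLeft ℤ b ∘ₗ ψ
  have hf : Function.Injective f := (mul_right_injective₀ ha).comp hI.injective
  have hg : Function.Injective g := (mul_right_injective₀ hb).comp hJ.injective
  have hfg : LinearMap.range f = LinearMap.range g := by
    rw [hI.range_mulLeft_comp, hJ.range_mulLeft_comp, hab]
  let e := (LinearEquiv.ofInjective f hf).trans
    ((LinearEquiv.ofEq _ _ hfg).trans (LinearEquiv.ofInjective g hg).symm)
  have hge (x : Fin 2 → ℤ) : b * ψ (e x) = a * χ x :=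
    LinearEquiv.ofInjective_symm_apply (h := hg) g _
  refine matRel_iff_exists_linearEquiv.2 ⟨e, fun x => hg ?_⟩
  change b * ψ (e (A *ᵥ x)) = b * ψ (B *ᵥ e x)
  rw [hge, hI.map_mulVec, hJ.map_mulVec]
  linear_combination -root t d * hge x

end IsMulRootMatrix

lemma exists_isMulRootMatrix [IsDomain (QuadOrder t d)] {J : Ideal (QuadOrder t d)}
    (hJ : J ≠ ⊥) : ∃ A χ, IsMulRootMatrix A J χ := by
  let e : (Fin 2 → ℤ) ≃ₗ[ℤ] J := (Ideal.selfBasis (basis t d) J hJ).equivFun.symm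
  let m : J →ₗ[ℤ] J := (LinearMap.lsmul (QuadOrder t d) J (root t d)).restrictScalars ℤ
  refine ⟨LinearMap.toMatrix' (e.symm.toLinearMap ∘ₗ m ∘ₗ e),
    J.subtype.restrictScalars ℤ ∘ₗ e, Subtype.val_injective.comp e.injective, ?_, fun x => ?_⟩
  · rw [LinearMap.range_comp, LinearEquiv.range, Submodule.map_top]
    ext y
    simp
  · simp [m]

variable (t d) in
noncomputable def idealOfMatrix (A : Matrix (Fin 2) (Fin 2) ℤ) : Ideal (QuadOrder t d) :=
  Ideal.span {(A 1 0 : QuadOrder t d), root t d - A 0 0}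

variable (t d) in
noncomputable def coordsOfMatrix (A : Matrix (Fin 2) (Fin 2) ℤ) :
    (Fin 2 → ℤ) →ₗ[ℤ] QuadOrder t d :=
  Fintype.linearCombination ℤ ![(A 1 0 : QuadOrder t d), root t d - A 0 0]

lemma coordsOfMatrix_apply {A : Matrix (Fin 2) (Fin 2) ℤ} (x : Fin 2 → ℤ) :
    coordsOfMatrix t d A x = x 0 * (A 1 0 : QuadOrder t d) + x 1 * (root t d - A 0 0) := by
  simp [coordsOfMatrix, Fintype.linearCombination_apply, Fin.sum_univ_two]

lemma isMulRootMatrix_coordsOfMatrix (hroot : ∀ n : ℤ, n ^ 2 - t * n + d ≠ 0)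
    {A : Matrix (Fin 2) (Fin 2) ℤ} (hA : A * A - t • A + d • (1 : Matrix (Fin 2) (Fin 2) ℤ) = 0) :
    IsMulRootMatrix A (idealOfMatrix t d A) (coordsOfMatrix t d A) := by
  have hmul (x : Fin 2 → ℤ) :
      coordsOfMatrix t d A (A *ᵥ x) = root t d * coordsOfMatrix t d A x := by
    have htr : ((A.trace : ℤ) : QuadOrder t d) = t := by rw [trace_eq_of_quadratic hA hroot]
    have hdet : ((A.det : ℤ) : QuadOrder t d) = d := by rw [det_eq_of_quadratic hA hroot]
    rw [trace_fin_two] at htr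
    rw [det_fin_two] at hdet
    simp only [coordsOfMatrix_apply, mulVec, dotProduct, Fin.sum_univ_two]
    push_cast at htr hdet ⊢
    linear_combination -(x 1 : QuadOrder t d) * (root_sq t d - root t d * htr + hdet)
  refine ⟨?_, le_antisymm ?_ ?_, hmul⟩
  · rw [← LinearMap.ker_eq_bot, LinearMap.ker_eq_bot']
    intro x hx
    rw [coordsOfMatrix_apply] at hx
    obtain ⟨h0, h1⟩ := eq_zero_of_intCast_add_intCast_mul_root_eq_zero
      (p := x 0 * A 1 0 - x 1 * A 0 0) (q := x 1) (by push_cast; linear_combination hx)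
    have hx0 : x 0 = 0 := by
      simpa [h1, apply_one_zero_ne_zero_of_quadratic hA hroot] using h0
    ext i
    fin_cases i <;> simp [hx0, h1]
  · rintro _ ⟨x, rfl⟩
    exact Ideal.mem_span_pair.2 ⟨x 0, x 1, (coordsOfMatrix_apply x).symm⟩
  · intro y hy
    obtain ⟨r, s, rfl⟩ := Ideal.mem_span_pair.1 hy
    have h0 := mul_mem_range hmul r (Pi.single 0 1)
    have h1 := mul_mem_range hmul s (Pi.single 1 1)
    simp only [coordsOfMatrix_apply] at h0 h1
    simpa using add_mem h0 h1

end QuadOrder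

/-- if `x² − tx + d` is irreducible over `ℚ`, there is a bijection
between the conjugacy classes (under units of `M₂(ℤ)`) of integer matrices `A` with
`A² − tA + dI = 0` and the classes of nonzero ideals of `ℤ[α] = ℤ[X]/(X² − tX + d)`.
The bijection between the quotients is expressed by a map `F` on representatives
which respects the two equivalences in both directions and is surjective up to
equivalence. -/
theorem matrix_classes_biject_ideal_classes (t d : ℤ)
    (hirr : Irreducible ((X : ℚ[X]) ^ 2 - C (t : ℚ) * X + C (d : ℚ))) :
    ∃ F : {A : Matrix (Fin 2) (Fin 2) ℤ //
            A * A - t • A + d • (1 : Matrix (Fin 2) (Fin 2) ℤ) = 0} →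
          {I : Ideal (QuadOrder t d) // I ≠ ⊥},
      (∀ A B, MatRel A.1 B.1 ↔ IdealRel (F A).1 (F B).1) ∧
      (∀ J : {I : Ideal (QuadOrder t d) // I ≠ ⊥}, ∃ A, IdealRel (F A).1 J.1) := by
  have := QuadOrder.isDomain_of_irreducible hirr
  have hF (A : Matrix (Fin 2) (Fin 2) ℤ) (hA : A * A - t • A + d • 1 = 0) :=
    QuadOrder.isMulRootMatrix_coordsOfMatrix
      (QuadOrder.sq_sub_mul_add_ne_zero_of_irreducible hirr) hA
  refine ⟨fun A => ⟨QuadOrder.idealOfMatrix t d A, (hF A A.2).ne_bot⟩,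
    fun A B => ⟨fun h => ?_, ?_⟩, fun J => ?_⟩
  · obtain ⟨e, he⟩ := matRel_iff_exists_linearEquiv.1 h
    exact ((hF A A.2).conj e he).idealRel (hF B B.2)
  · exact (hF A A.2).matRel (hF B B.2)
  · obtain ⟨A, χ, hχ⟩ := QuadOrder.exists_isMulRootMatrix J.2
    exact ⟨⟨A, hχ.quadratic⟩, (hF A hχ.quadratic).idealRel hχ⟩
end

section
/- Let t and d be integers such that the polynomial x² − t·x + d is irreducible over ℚ, let R = ℤ[α] = ℤ[X]/(X² − tX + d) with α the image of X, and let A be a 2×2 integer matrix satisfying A·A − t·A + d·I = 0. Then there exists a nonzero vector v : Fin 2 → R such that (the image of) A applied to v equals α·v, i.e. mapping the entries of A into R via the canonical map ℤ → R, one has A.mulVec v = α • v. -/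
open Polynomial

/-- The root `α`, i.e. the image of `X` in `ℤ[X]/(X² − tX + d)`. -/
noncomputable def quadAlpha (t d : ℤ) : QuadOrder t d :=
  AdjoinRoot.root _

/-!
A matrix `B` with `B² − tB + d = 0` factors as `(B − α)(B − (t − α)) = 0` once `α` is a root of
`x² − tx + d`, so every column of `B − (t − α)` is an eigenvector of `B` for `α`. The first column
has first entry `α + (A₀₀ − t)`, which is nonzero because `α` is not an integer: `X − n` is not
divisible by the monic quadratic `X² − tX + d`.
-/

theorem AdjoinRoot.root_ne_of {R : Type*} [CommRing R] [Nontrivial R] {f : R[X]} (hf : f.Monic)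
    (h2 : 2 ≤ f.natDegree) (r : R) : root f ≠ of f r := by
  intro h
  have hdvd : f ∣ X - C r := by
    rw [← AdjoinRoot.mk_eq_zero, map_sub, AdjoinRoot.mk_X, AdjoinRoot.mk_C, h, sub_self]
  exact hf.not_dvd_of_natDegree_lt (X_sub_C_ne_zero r) (by rw [natDegree_X_sub_C]; omega) hdvd

namespace Matrix

variable {n R : Type*} [Fintype n] [DecidableEq n] [CommRing R]

theorem sub_smul_one_mul_sub_smul_one_eq_zero {B : Matrix n n R} {t d a : R}
    (hB : B * B - t • B + d • 1 = 0) (ha : a ^ 2 - t * a + d = 0) :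
    (B - a • 1) * (B - (t - a) • 1) = 0 := by
  calc (B - a • 1) * (B - (t - a) • 1)
      = B * B - t • B + d • 1 - (a ^ 2 - t * a + d) • 1 := by
        simp only [sub_mul, mul_sub, smul_mul_assoc, mul_smul_comm, one_mul, mul_one]
        module
    _ = 0 := by rw [hB, ha, zero_smul, sub_zero]

theorem mulVec_mulVec_eq_smul_of_sub_smul_one_mul_eq_zero {B C : Matrix n n R} {a : R}
    (h : (B - a • 1) * C = 0) (w : n → R) : B *ᵥ (C *ᵥ w) = a • (C *ᵥ w) := by
  have := congrArg (· *ᵥ w) h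
  simp only [← mulVec_mulVec, sub_mulVec, smul_mulVec, one_mulVec, zero_mulVec] at this
  exact sub_eq_zero.mp this

end Matrix

section

variable {t d : ℤ}

theorem quadAlpha_sq_sub_mul_add_eq_zero : quadAlpha t d ^ 2 - t * quadAlpha t d + d = 0 := by
  have := AdjoinRoot.eval₂_root ((X : ℤ[X]) ^ 2 - C t * X + C d)
  simp only [eval₂_add, eval₂_sub, eval₂_mul, eval₂_pow, eval₂_X, eval₂_C] at this
  exact this

theorem quadAlpha_ne_intCast (m : ℤ) : quadAlpha t d ≠ m := by
  have hmonic : ((X : ℤ[X]) ^ 2 - C t * X + C d).Monic := by monicity!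
  have hdeg : ((X : ℤ[X]) ^ 2 - C t * X + C d).natDegree = 2 := by compute_degree!
  have := AdjoinRoot.root_ne_of hmonic hdeg.ge m
  rwa [eq_intCast] at this

end

theorem exists_eigenvector_in_quad_order_general (t d : ℤ)
    (A : Matrix (Fin 2) (Fin 2) ℤ)
    (hA : A * A - t • A + d • (1 : Matrix (Fin 2) (Fin 2) ℤ) = 0) :
    ∃ v : Fin 2 → QuadOrder t d, v ≠ 0 ∧
      (A.map (Int.cast : ℤ → QuadOrder t d)).mulVec v = quadAlpha t d • v := by
  set α := quadAlpha t d
  set B := A.map (Int.cast : ℤ → QuadOrder t d)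
  have hB : B * B - (t : QuadOrder t d) • B + (d : QuadOrder t d) • 1 = 0 := by
    have := congrArg (Int.castRingHom (QuadOrder t d)).mapMatrix hA
    simp only [map_add, map_sub, map_mul, map_zsmul, map_one, map_zero] at this
    rw [Int.cast_smul_eq_zsmul, Int.cast_smul_eq_zsmul]
    exact this
  have hfactor := Matrix.sub_smul_one_mul_sub_smul_one_eq_zero hB quadAlpha_sq_sub_mul_add_eq_zero
  refine ⟨(B - (t - α) • 1).mulVec (Pi.single 0 1), fun hv => ?_,
    Matrix.mulVec_mulVec_eq_smul_of_sub_smul_one_mul_eq_zero hfactor _⟩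
  have hv0 : (A 0 0 : QuadOrder t d) - (t - α) = 0 := by
    simpa [B] using congrFun hv 0
  apply quadAlpha_ne_intCast (t - A 0 0)
  push_cast
  linear_combination hv0

/-- if `x² − tx + d` is irreducible over `ℚ` and `A` is a 2×2 integer
matrix with `A² − tA + dI = 0`, then `A` has a nonzero eigenvector with entries in
`ℤ[α]` for the eigenvalue `α`. -/
theorem exists_eigenvector_in_quad_order (t d : ℤ)
    (hirr : Irreducible ((X : ℚ[X]) ^ 2 - C (t : ℚ) * X + C (d : ℚ)))
    (A : Matrix (Fin 2) (Fin 2) ℤ)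
    (hA : A * A - t • A + d • (1 : Matrix (Fin 2) (Fin 2) ℤ) = 0) :
    ∃ v : Fin 2 → QuadOrder t d, v ≠ 0 ∧
      (A.map (Int.cast : ℤ → QuadOrder t d)).mulVec v = quadAlpha t d • v :=
  exists_eigenvector_in_quad_order_general t d A hA
end

section
/- Let t and d be integers such that the polynomial x² − t·x + d is irreducible over ℚ, and let A be a 2×2 integer matrix satisfying A·A − t·A + d·I = 0. Let C = [[0,1],[−d,t]] be the companion matrix of x² − tx + d. Then there exists a 2×2 integer matrix M with det(M) ≠ 0 such that A·M = M·C; in other words, A is conjugate to the companion matrix C by an integer matrix of nonzero determinant (equivalently, A = M·C·M⁻¹ over ℚ). -/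
open Polynomial

/-- if `x² − tx + d` is irreducible over `ℚ` and `A` is a 2×2 integer
matrix with `A² − tA + dI = 0`, then `A` is conjugate to the companion matrix
`C = [[0,1],[−d,t]]` by an integer matrix `M` of nonzero determinant, in the sense
that `A·M = M·C`. -/
theorem conj_to_companion_matrix (t d : ℤ)
    (hirr : Irreducible ((X : ℚ[X]) ^ 2 - C (t : ℚ) * X + C (d : ℚ)))
    (A : Matrix (Fin 2) (Fin 2) ℤ)
    (hA : A * A - t • A + d • (1 : Matrix (Fin 2) (Fin 2) ℤ) = 0) :
    ∃ M : Matrix (Fin 2) (Fin 2) ℤ, M.det ≠ 0 ∧ A * M = M * !![0, 1; -d, t] := by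
  have key := Matrix.ext_iff.mpr hA
  have h00 := key 0 0
  have h01 := key 0 1
  have h10 := key 1 0
  have h11 := key 1 1
  simp only [Matrix.sub_apply, Matrix.add_apply, Matrix.mul_apply, Matrix.smul_apply,
    Matrix.one_apply, smul_eq_mul, Fin.sum_univ_two, Matrix.zero_apply] at h00 h01 h10 h11
  norm_num at h00 h01 h10 h11
  by_cases hc : A 1 0 ≠ 0
  · refine ⟨!![A 0 0 - t, 1; A 1 0, 0], ?_, ?_⟩
    · simp [Matrix.det_fin_two]; omega
    · ext i j
      fin_cases i <;> fin_cases j <;>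
        simp [Matrix.mul_apply, Fin.sum_univ_two] <;> nlinarith [h00, h01, h10, h11]
  · by_cases hb : A 0 1 ≠ 0
    · refine ⟨!![A 0 1, 0; A 1 1 - t, 1], ?_, ?_⟩
      · simp [Matrix.det_fin_two]; omega
      · ext i j
        fin_cases i <;> fin_cases j <;>
          simp [Matrix.mul_apply, Fin.sum_univ_two] <;> nlinarith [h00, h01, h10, h11]
    · -- b = c = 0, contradiction
      push_neg at hb hc
      exfalso
      have ha : (A 0 0 : ℚ)^2 - t * A 0 0 + d = 0 := by
        have : A 0 0 * A 0 0 - t * A 0 0 + d = 0 := by rw [hb] at h00; omega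
        have := congrArg (Int.cast : ℤ → ℚ) this
        push_cast at this; linarith [this]
      have hroot : ((X : ℚ[X]) ^ 2 - C (t : ℚ) * X + C (d : ℚ)).IsRoot (A 0 0 : ℚ) := by
        simp [IsRoot, ha]
      obtain ⟨q, hq⟩ := dvd_iff_isRoot.mpr hroot
      rcases hirr.isUnit_or_isUnit hq with h | h
      · exact Polynomial.not_isUnit_X_sub_C _ h
      · have hdeg : ((X : ℚ[X]) ^ 2 - C (t : ℚ) * X + C (d : ℚ)).natDegree = 2 := by
          compute_degree!
        have hqne : q ≠ 0 := fun h0 => hirr.ne_zero (by rw [hq, h0, mul_zero])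
        rw [hq, Polynomial.natDegree_mul (X_sub_C_ne_zero _) hqne,
          natDegree_X_sub_C, Polynomial.natDegree_eq_zero_of_isUnit h] at hdeg
        omega
end

section
/- Let t be an integer with t > 2, let R = ℤ[α] = ℤ[X]/(X² − tX + 1) with α the image of X, and let m, m' be integers with m·m' = t − 2 that are coprime (IsCoprime in ℤ). Then, as ideals of R, (m, α−1)·(m', α−1) = (α−1), i.e. the product of the ideal generated by m and α−1 with the ideal generated by m' and α−1 equals the principal ideal generated by α−1. -/
open Polynomial

/-- The order `ℤ[α] = ℤ[X]/(X² − tX + 1)`. -/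
def QuadOrd (t : ℤ) : Type :=
  AdjoinRoot ((X : ℤ[X]) ^ 2 - C t * X + 1)

noncomputable instance (t : ℤ) : CommRing (QuadOrd t) :=
  inferInstanceAs (CommRing (AdjoinRoot _))

/-- The root `α`, i.e. the image of `X` in `ℤ[X]/(X² − tX + 1)`. -/
noncomputable def ordAlpha (t : ℤ) : QuadOrd t :=
  AdjoinRoot.root _

/-! Since `(α − 1)(α − (t − 1)) = t − 2 = m m'`, the generator `α − 1` divides the product of
the other two generators, and a Bézout relation `u m + v m' = 1` writes
`α − 1 = u · m(α − 1) + v · (α − 1)m'` inside the product ideal. -/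

theorem Ideal.span_pair_mul_span_pair_eq_span_singleton {R : Type*} [CommSemiring R]
    {a b x : R} (hab : IsCoprime a b) (hx : x ∣ a * b) :
    span {a, x} * span {b, x} = span {x} := by
  apply le_antisymm
  · rw [span_pair_mul_span_pair, span_le]
    rintro _ (rfl | rfl | rfl | rfl) <;>
      simp [mem_span_singleton, hx, dvd_mul_left, dvd_mul_right]
  · obtain ⟨u, v, huv⟩ := hab
    have hcomb : u * (a * x) + v * (x * b) = x := by
      calc u * (a * x) + v * (x * b) = (u * a + v * b) * x := by ring
        _ = x := by rw [huv, one_mul]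
    have hmem : u * (a * x) + v * (x * b) ∈ span {a, x} * span {b, x} :=
      add_mem (mul_mem_left _ _ (mul_mem_mul (subset_span (by simp)) (subset_span (by simp))))
        (mul_mem_left _ _ (mul_mem_mul (subset_span (by simp)) (subset_span (by simp))))
    rw [span_singleton_le_iff_mem]
    rwa [hcomb] at hmem

theorem ordAlpha_sq_sub_mul_add_one (t : ℤ) : ordAlpha t ^ 2 - t * ordAlpha t + 1 = 0 := by
  have h := AdjoinRoot.eval₂_root ((X : ℤ[X]) ^ 2 - C t * X + 1)
  simp only [eval₂_add, eval₂_sub, eval₂_mul, eval₂_pow, eval₂_X, eval₂_C, eval₂_one] at h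
  simp only [eq_intCast] at h
  exact h

theorem ordAlpha_sub_one_dvd (t : ℤ) : ordAlpha t - 1 ∣ (t - 2 : QuadOrd t) :=
  ⟨ordAlpha t - (t - 1), by linear_combination -ordAlpha_sq_sub_mul_add_one t⟩

theorem ideal_product_inverse_classes_general (t : ℤ)
    (m m' : ℤ) (hmm : m * m' = t - 2) (hcop : IsCoprime m m') :
    Ideal.span ({(m : QuadOrd t), ordAlpha t - 1} : Set (QuadOrd t)) *
        Ideal.span ({(m' : QuadOrd t), ordAlpha t - 1} : Set (QuadOrd t)) =
      Ideal.span ({ordAlpha t - 1} : Set (QuadOrd t)) := by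
  have hmm' : (m : QuadOrd t) * m' = t - 2 := by
    simpa using congrArg (Int.cast : ℤ → QuadOrd t) hmm
  exact Ideal.span_pair_mul_span_pair_eq_span_singleton
    (by simpa using hcop.map (Int.castRingHom (QuadOrd t))) (hmm' ▸ ordAlpha_sub_one_dvd t)

/-- for `t > 2` and coprime integers `m, m'` with `m·m' = t − 2`, one
has `(m, α−1)·(m', α−1) = (α−1)` as ideals of `ℤ[α] = ℤ[X]/(X² − tX + 1)`. -/
theorem ideal_product_inverse_classes (t : ℤ) (ht : 2 < t)
    (m m' : ℤ) (hmm : m * m' = t - 2) (hcop : IsCoprime m m') :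
    Ideal.span ({(m : QuadOrd t), ordAlpha t - 1} : Set (QuadOrd t)) *
        Ideal.span ({(m' : QuadOrd t), ordAlpha t - 1} : Set (QuadOrd t)) =
      Ideal.span ({ordAlpha t - 1} : Set (QuadOrd t)) :=
  ideal_product_inverse_classes_general t m m' hmm hcop
end

section
/- Let t be an integer with t > 2, let R = ℤ[α] = ℤ[X]/(X² − tX + 1) with α the image of X, and let m, m' be integers with m·m' = t − 2 that are coprime (IsCoprime in ℤ). Then, as ideals of R, (m, α−1)² = (m), i.e. the square of the ideal generated by m and α−1 equals the principal ideal generated by m. In particular the class of (m, α−1) in the ideal class group has order dividing 2. -/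
/-! Since `α² = tα − 1`, one has `(α − 1)² = (t − 2)α = m m' α`, and `α` is a unit with inverse
`t − α`. So `(α − 1)²` is associated to `m m'`. For any coprime `m, m'` and `x` with `x²` associated
to `m m'`, the ideal `(m, x)²` lies in `(m)` because `m ∣ x²`, and contains
`m = a m² + b m m'` (where `a m + b m' = 1`) because `m m' ∈ (x²)`. -/

open Polynomial

theorem Ideal.span_pair_sq_eq_span_singleton {R : Type*} [CommRing R] {m m' x : R}
    (hcop : IsCoprime m m') (hx : Associated (x ^ 2) (m * m')) :
    Ideal.span {m, x} ^ 2 = Ideal.span {m} := by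
  apply le_antisymm
  · have hmx : m ∣ x * x := (dvd_mul_right m m').trans (sq x ▸ hx.symm.dvd)
    rw [sq, Ideal.span_pair_mul_span_pair, Ideal.span_le]
    simp only [Set.insert_subset_iff, Set.singleton_subset_iff, SetLike.mem_coe,
      Ideal.mem_span_singleton]
    exact ⟨dvd_mul_right m m, dvd_mul_right m x, dvd_mul_left m x, hmx⟩
  · obtain ⟨a, b, hab⟩ := hcop
    have hm_sq : m ^ 2 ∈ Ideal.span {m, x} ^ 2 :=
      Ideal.pow_mem_pow (Ideal.subset_span (by simp)) 2
    have hmm' : m * m' ∈ Ideal.span {m, x} ^ 2 := by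
      obtain ⟨u, hu⟩ := hx
      exact hu ▸ Ideal.mul_mem_right _ _ (Ideal.pow_mem_pow (Ideal.subset_span (by simp)) 2)
    have hm : m = a * m ^ 2 + b * (m * m') := by linear_combination -m * hab
    have := Ideal.add_mem _ (Ideal.mul_mem_left _ a hm_sq) (Ideal.mul_mem_left _ b hmm')
    rwa [← hm, ← Ideal.span_singleton_le_iff_mem] at this

theorem ordAlpha_sq (t : ℤ) : ordAlpha t ^ 2 = (t : QuadOrd t) * ordAlpha t - 1 := by
  have h := AdjoinRoot.eval₂_root ((X : ℤ[X]) ^ 2 - C t * X + 1)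
  simp only [eval₂_add, eval₂_sub, eval₂_mul, eval₂_pow, eval₂_C, eval₂_X, eval₂_one] at h
  have hcast : AdjoinRoot.of ((X : ℤ[X]) ^ 2 - C t * X + 1) t = (t : QuadOrd t) :=
    map_intCast _ t
  rw [hcast] at h
  have h' : ordAlpha t ^ 2 - (t : QuadOrd t) * ordAlpha t + 1 = 0 := h
  linear_combination h'

theorem ordAlpha_mul_sub_ordAlpha (t : ℤ) : ordAlpha t * ((t : QuadOrd t) - ordAlpha t) = 1 := by
  linear_combination -ordAlpha_sq t

theorem associated_ordAlpha_sub_one_sq (t : ℤ) :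
    Associated ((ordAlpha t - 1) ^ 2) ((t : QuadOrd t) - 2) := by
  have hunit : IsUnit ((t : QuadOrd t) - ordAlpha t) :=
    IsUnit.of_mul_eq_one_right _ (ordAlpha_mul_sub_ordAlpha t)
  convert associated_mul_unit_right _ _ hunit using 1
  linear_combination -((t : QuadOrd t) - 2) * ordAlpha_mul_sub_ordAlpha t
    - ((t : QuadOrd t) - ordAlpha t) * ordAlpha_sq t

theorem ideal_square_principal_general (t : ℤ)
    (m m' : ℤ) (hmm : m * m' = t - 2) (hcop : IsCoprime m m') :
    Ideal.span ({(m : QuadOrd t), ordAlpha t - 1} : Set (QuadOrd t)) ^ 2 =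
      Ideal.span ({(m : QuadOrd t)} : Set (QuadOrd t)) := by
  have hmm' : (t : QuadOrd t) - 2 = m * m' := by
    rw [← Int.cast_mul, hmm, Int.cast_sub, Int.cast_ofNat]
  have hassoc : Associated ((ordAlpha t - 1) ^ 2) ((m : QuadOrd t) * m') :=
    hmm' ▸ associated_ordAlpha_sub_one_sq t
  exact Ideal.span_pair_sq_eq_span_singleton hcop.intCast hassoc

/-- for `t > 2` and coprime integers `m, m'` with `m·m' = t − 2`, one
has `(m, α−1)² = (m)` as ideals of `ℤ[α] = ℤ[X]/(X² − tX + 1)`; in particular the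
class of `(m, α−1)` has order dividing 2 in the class group. -/
theorem ideal_square_principal (t : ℤ) (ht : 2 < t)
    (m m' : ℤ) (hmm : m * m' = t - 2) (hcop : IsCoprime m m') :
    Ideal.span ({(m : QuadOrd t), ordAlpha t - 1} : Set (QuadOrd t)) ^ 2 =
      Ideal.span ({(m : QuadOrd t)} : Set (QuadOrd t)) :=
  ideal_square_principal_general t m m' hmm hcop
end
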